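/- arXiv:2410.08309 — 2 statements merged into one kernel-verified Lean document; each statement's English description precedes it below -/
import Mathlib

section
/- (Upper Bounded Diagonal Entry) Under the discrete dynamics w_{i,i}(t+1) = w_{i,i}(t) + η[2a_i w_{i,i}(1 - w_{i,i}) - N_{i,i}(t)] with 0 ≤ w_{i,i}(t) always (PSD), |N_{i,i}(t)| ≤ K^{-1} a_i, η ≤ 1/(9Kγα), a_i ≤ γα, and K ≥ 20, if w_{i,i}(0) ≤ 1 + 2K^{-1} then w_{i,i}(t) ≤ 1 + 2K^{-1} for all t ∈ ℕ. -/
/-- Upper Bounded Diagonal Entry, Lemma C.8: under the discrete dynamics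
`w(t+1) = w(t) + η[2a w(t)(1 - w(t)) - N(t)]` with `w(t) ≥ 0` always (PSD),
`|N(t)| ≤ a/K`, `η ≤ 1/(9Kγα)`, `a ≤ γα`, `K ≥ 20`, if `w(0) ≤ 1 + 2/K` then
`w(t) ≤ 1 + 2/K` for all `t`. -/
theorem stmt_14 (a α γ η K : ℝ) (w N : ℕ → ℝ)
    (ha : 0 < a) (hα : 0 < α) (hγ : 1 ≤ γ) (haγ : a ≤ γ * α)
    (hK : 20 ≤ K) (hη : 0 < η) (hη' : η ≤ 1 / (9 * K * γ * α))
    (hpos : ∀ t, 0 ≤ w t)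
    (hN : ∀ t, |N t| ≤ a / K)
    (hupdate : ∀ t, w (t + 1) = w t + η * (2 * a * w t * (1 - w t) - N t))
    (h0 : w 0 ≤ 1 + 2 / K) :
    ∀ t, w t ≤ 1 + 2 / K := by
  have hK0 : (0:ℝ) < K := by linarith
  have hγα : (0:ℝ) < γ * α := by nlinarith
  have hηa : η * (9 * a) ≤ 1 / K := by
    have h1 : η * (9 * (γ * α)) ≤ (1 / (9 * K * γ * α)) * (9 * (γ * α)) := by
      apply mul_le_mul_of_nonneg_right hη'; positivity
    have h2 : (1 / (9 * K * γ * α)) * (9 * (γ * α)) = 1 / K := by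
      field_simp
    nlinarith
  intro t
  induction t with
  | zero => exact h0
  | succ t ih =>
    have habs := abs_le.mp (hN t)
    have h1K : (0:ℝ) < 1 / K := by positivity
    have haK : a / K ≤ a := by rw [div_le_iff₀ hK0]; nlinarith
    have hw := hpos t
    rw [hupdate t]
    by_cases hc : w t ≤ 1 + 1 / K
    · have hdrift : 2 * a * w t * (1 - w t) - N t ≤ 9 * a := by
        nlinarith [habs.1, mul_nonneg ha.le (sq_nonneg (2 * w t - 1))]
      have hstep : η * (2 * a * w t * (1 - w t) - N t) ≤ η * (9 * a) :=
        mul_le_mul_of_nonneg_left hdrift hη.le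
      have h2K : (2:ℝ) / K = 1 / K + 1 / K := by ring
      linarith
    · push_neg at hc
      have hstep : 2 * a * w t * (1 - w t) - N t ≤ 0 := by
        have h1 : 1 / K ≤ w t * (w t - 1) := by nlinarith
        have h2 : a * (1 / K) ≤ a * (w t * (w t - 1)) := mul_le_mul_of_nonneg_left h1 ha.le
        have h3 : a / K = a * (1 / K) := by ring
        nlinarith [h2, h3, mul_pos ha h1K, habs.1]
      have : η * (2 * a * w t * (1 - w t) - N t) ≤ 0 :=
        mul_nonpos_of_nonneg_of_nonpos hη.le hstep
      linarith
end

section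
/- For the one-layer gradient flow solution, the output at the OOD test point x̂ = Σ_{p=1}^s μ_p e_p converges to x̂ as t → ∞ (compositional generalization), provided all a_p > 0 for p ≤ s: that is, lim_{t→∞} W(t) x̂ = x̂. -/
open Matrix Filter

lemma ode_tendsto (c b : ℝ) (hc : 0 < c) (f : ℝ → ℝ)
    (hf : ∀ t, HasDerivAt f (-(c * (f t - b))) t) :
    Tendsto f atTop (nhds b) := by
  set g : ℝ → ℝ := fun u => (f u - b) * Real.exp (c * u) with hgdef
  have hg : ∀ t, HasDerivAt g 0 t := by
    intro t
    have h1 : HasDerivAt (fun u => f u - b) (-(c * (f t - b))) t := (hf t).sub_const b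
    have h2 : HasDerivAt (fun u => Real.exp (c * u)) (Real.exp (c * t) * c) t := by
      have hlin : HasDerivAt (fun u : ℝ => c * u) c t := by
        simpa using (hasDerivAt_id t).const_mul c
      exact (Real.hasDerivAt_exp (c * t)).comp t hlin
    have := h1.mul h2
    refine this.congr_deriv ?_
    ring
  have hconst : ∀ t, g t = g 0 := by
    intro t
    have hdiff : Differentiable ℝ g := fun x => (hg x).differentiableAt
    have hderiv : ∀ x, deriv g x = 0 := fun x => (hg x).deriv
    exact is_const_of_deriv_eq_zero hdiff hderiv t 0
  have key : ∀ t, f t = b + (f 0 - b) * Real.exp (-(c * t)) := by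
    intro t
    have h := hconst t
    simp only [hgdef, mul_zero, Real.exp_zero, mul_one] at h
    have hne : Real.exp (c * t) ≠ 0 := (Real.exp_pos _).ne'
    rw [Real.exp_neg, ← h]
    field_simp
    ring
  have hlim : Tendsto (fun t => b + (f 0 - b) * Real.exp (-(c * t))) atTop (nhds b) := by
    have h1 : Tendsto (fun t : ℝ => -(c * t)) atTop atBot := by
      have := (tendsto_const_mul_atTop_of_pos hc).mpr (tendsto_id (α := ℝ))
      exact tendsto_neg_atBot_iff.mpr this
    have h2 : Tendsto (fun t : ℝ => Real.exp (-(c * t))) atTop (nhds 0) :=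
      Real.tendsto_exp_atBot.comp h1
    have := (h2.const_mul (f 0 - b)).const_add b
    simpa using this
  exact hlim.congr (fun t => (key t).symm)

/-- For the one-layer gradient flow `Ẇ = -(W - I)A` with `A = diag(a)`,
`a_p > 0` for `p ≤ s` and `a_p = 0` for `p > s`, the output at the OOD test point
`x̂ = Σ_{p=1}^s μ_p e_p` converges to `x̂` as `t → ∞` (compositional generalization):
`lim_{t→∞} W(t) x̂ = x̂`. -/
theorem stmt_19 {d : ℕ} (s : ℕ) (hsd : s ≤ d) (a μ : Fin d → ℝ)
    (hapos : ∀ p : Fin d, (p : ℕ) < s → 0 < a p)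
    (hazero : ∀ p : Fin d, s ≤ (p : ℕ) → a p = 0)
    (W : ℝ → Matrix (Fin d) (Fin d) ℝ)
    (hW : ∀ (t : ℝ) (k i : Fin d),
      HasDerivAt (fun u => W u k i) (-(((W t - 1) * Matrix.diagonal a) k i)) t)
    (xhat : Fin d → ℝ)
    (hxhat : ∀ i : Fin d, xhat i = if (i : ℕ) < s then μ i else 0) :
    Tendsto (fun t => (W t).mulVec xhat) atTop (nhds xhat) := by
  rw [tendsto_pi_nhds]
  intro k
  have hterm : ∀ i : Fin d,
      Tendsto (fun t => W t k i * xhat i) atTop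
        (nhds ((if k = i then (1:ℝ) else 0) * xhat i)) := by
    intro i
    by_cases hi : (i : ℕ) < s
    · have hfi : ∀ t, HasDerivAt (fun u => W u k i)
          (-(a i * (W t k i - (if k = i then (1:ℝ) else 0)))) t := by
        intro t
        have := hW t k i
        convert this using 1
        simp [Matrix.mul_apply, Matrix.diagonal, Matrix.sub_apply, Matrix.one_apply]
        ring
      have := ode_tendsto (a i) (if k = i then (1:ℝ) else 0) (hapos i hi)
        (fun u => W u k i) hfi
      exact this.mul_const (xhat i)
    · have hx0 : xhat i = 0 := by rw [hxhat]; simp [hi]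
      simp [hx0]
  have hsum : Tendsto (fun t => ∑ i, W t k i * xhat i) atTop
      (nhds (∑ i, (if k = i then (1:ℝ) else 0) * xhat i)) :=
    tendsto_finset_sum _ (fun i _ => hterm i)
  have : (∑ i, (if k = i then (1:ℝ) else 0) * xhat i) = xhat k := by simp
  rw [this] at hsum
  exact hsum.congr (fun t => by simp [Matrix.mulVec, dotProduct])
end
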